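/- Let J be a compact interval, 0 < μ ≤ 1/2, and γ = log 2/log(1/μ). Let C_μ(J) be the self-similar Cantor set obtained by repeatedly removing the open middle piece of relative length 1−2μ. Then for every δ ∈ (0,|J|), (1/2)|J|^γ δ^{-γ} ≤ N(C_μ(J), δ) ≤ 2 |J|^γ δ^{-γ}. -/

import Mathlib

/-- Minimal number of closed intervals of length `δ` needed to cover `E`. -/
noncomputable def covN (E : Set ℝ) (δ : ℝ) : ℕ :=
  sInf {n : ℕ | ∃ c : Fin n → ℝ, E ⊆ ⋃ i, Set.Icc (c i) (c i + δ)}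

/-- The union of the `2^m` intervals of length `μ^m L` of the `m`-th generation of the
middle-piece Cantor construction with ratio `μ` on `[a, a+L]`. -/
noncomputable def cantorGen (μ a L : ℝ) (m : ℕ) : Set ℝ :=
  ⋃ σ : Fin m → Bool,
    Set.Icc (a + L * ∑ i : Fin m, (if σ i then (1 - μ) * μ ^ (i : ℕ) else 0))
      (a + L * ∑ i : Fin m, (if σ i then (1 - μ) * μ ^ (i : ℕ) else 0) + μ ^ m * L)

/-- The self-similar Cantor set with ratio `μ` on `[a, a+L]`. -/
noncomputable def cantorSetMu (μ a L : ℝ) : Set ℝ := ⋂ m : ℕ, cantorGen μ a L m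

/-!
The upper bound is the obvious cover: if `μ ^ (n + 1) * L ≤ δ`, the `2 ^ (n + 1)` intervals of
generation `n + 1` have length at most `δ`.

The lower bound is a discrete mass distribution argument. All `2 ^ M` left endpoints of
generation-`M` intervals lie in the Cantor set, and in coordinates normalised to `J = [0, 1]` an
interval `[c, d]` contains at most `2 ^ (M + 1) * max (μ ^ (M + 1)) (d - c) ^ γ` of them (the `max`
accounts for intervals too short to hold two endpoints). This is proved by induction on `M`
through self-similarity, using `μ ^ γ = 1/2`. The only delicate case is an interval meeting both
halves `[0, μ]` and `[1 - μ, 1]`: its pieces there have lengths `a`, `b` with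
`a + b + (1 - 2μ) ≤ d - c`, and concavity of `t ↦ t ^ γ` bounds `a ^ γ + b ^ γ` by `(d - c) ^ γ`,
the gap `1 - 2μ` paying for the loss in `2 ((a + b) / 2) ^ γ`. Choosing `μ ^ (M + 1) ≤ δ / L`,
a cover by `N` intervals of length `δ` then gives `2 ^ M ≤ N * 2 ^ (M + 1) * (δ / L) ^ γ`.
-/
open Finset

section

variable {μ γ : ℝ}

lemma add_rpow_le_two_mul_half_rpow {p x y : ℝ} (hp₀ : 0 ≤ p) (hp₁ : p ≤ 1) (hx : 0 ≤ x)
    (hy : 0 ≤ y) : x ^ p + y ^ p ≤ 2 * ((x + y) / 2) ^ p := by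
  have h := (Real.concaveOn_rpow hp₀ hp₁).2 (Set.mem_Ici.2 hx) (Set.mem_Ici.2 hy)
    (by norm_num : (0 : ℝ) ≤ 1 / 2) (by norm_num : (0 : ℝ) ≤ 1 / 2) (by norm_num)
  simp only [smul_eq_mul] at h
  rw [show (x + y) / 2 = 1 / 2 * x + 1 / 2 * y by ring]
  linarith

lemma add_mul_mem_Icc_iff {r e x c d : ℝ} (hr : 0 < r) :
    e + r * x ∈ Set.Icc c d ↔ x ∈ Set.Icc ((c - e) / r) ((d - e) / r) := by
  simp only [Set.mem_Icc, div_le_iff₀ hr, le_div_iff₀ hr]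
  constructor <;> rintro ⟨h₁, h₂⟩ <;> constructor <;> linarith

lemma rpow_log_two_div_log_one_div (hμ₀ : 0 < μ) (hμ₁ : μ < 1) :
    μ ^ (Real.log 2 / Real.log (1 / μ)) = 1 / 2 := by
  have hlog : Real.log μ ≠ 0 := (Real.log_neg hμ₀ hμ₁).ne
  rw [Real.rpow_def_of_pos hμ₀, one_div, Real.log_inv, div_neg, mul_neg,
    mul_div_cancel₀ _ hlog, Real.exp_neg, Real.exp_log two_pos, one_div]

lemma mem_Ioc_of_rpow_eq_half (hμ : 0 < μ) (hμ2 : μ ≤ 1 / 2) (hγ : μ ^ γ = 1 / 2) :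
    γ ∈ Set.Ioc 0 1 := by
  have hμ1 : μ < 1 := by linarith
  refine ⟨?_, ?_⟩
  · have : μ ^ γ < 1 := by rw [hγ]; norm_num
    rcases (Real.rpow_lt_one_iff_of_pos hμ).1 this with h | h
    · linarith [h.1]
    · exact h.2
  · rw [← Real.rpow_le_rpow_left_iff_of_base_lt_one hμ hμ1, hγ, Real.rpow_one]
    exact hμ2

lemma pow_rpow_of_rpow_eq_half (hμ : 0 < μ) (hγ : μ ^ γ = 1 / 2) (n : ℕ) :
    (μ ^ n) ^ γ = (1 / 2) ^ n := by
  rw [← Real.rpow_pow_comm hμ.le, hγ]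

lemma one_le_two_pow_mul_max_rpow (hμ : 0 < μ) (hμ2 : μ ≤ 1 / 2) (hγ : μ ^ γ = 1 / 2)
    (n : ℕ) (t : ℝ) : 1 ≤ 2 ^ n * max (μ ^ n) t ^ γ := by
  have hγ0 := (mem_Ioc_of_rpow_eq_half hμ hμ2 hγ).1.le
  calc (1 : ℝ) = 2 ^ n * (μ ^ n) ^ γ := by
        rw [pow_rpow_of_rpow_eq_half hμ hγ, ← mul_pow]; norm_num
    _ ≤ 2 ^ n * max (μ ^ n) t ^ γ := by
        gcongr
        exact le_max_left _ _

lemma two_pow_mul_max_div_rpow (hμ : 0 < μ) (hγ : μ ^ γ = 1 / 2) (n : ℕ) (t : ℝ) :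
    2 ^ n * max (μ ^ n) (t / μ) ^ γ = 2 ^ (n + 1) * max (μ ^ (n + 1)) t ^ γ := by
  have hmax : max (μ ^ n) (t / μ) = max (μ ^ (n + 1)) t / μ := by
    rw [← max_div_div_right hμ.le, pow_succ, mul_div_cancel_right₀ _ hμ.ne']
  have hpos : 0 ≤ max (μ ^ (n + 1)) t := (pow_pos hμ _).le.trans (le_max_left _ _)
  rw [hmax, Real.div_rpow hpos hμ.le, hγ, pow_succ]
  ring

/-- `a`, `b` are the lengths of the pieces of an interval inside the halves `[0, μ]` and
`[1 - μ, 1]`, separated by the gap `1 - 2μ`; `μ * q` is the resolution of the next generation. -/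
lemma max_rpow_add_max_rpow_le (hμ : 0 < μ) (hμ2 : μ ≤ 1 / 2) (hγ : μ ^ γ = 1 / 2)
    {q a b : ℝ} (hq : 0 ≤ q) (ha : 0 ≤ a) (hb : 0 ≤ b) (h1 : a + b + (1 - 2 * μ) + q < 1) :
    max (μ * q) a ^ γ + max (μ * q) b ^ γ ≤ (a + b + (1 - 2 * μ) + q) ^ γ := by
  obtain ⟨hγ0, hγ1⟩ := mem_Ioc_of_rpow_eq_half hμ hμ2 hγ
  set δ := a + b + (1 - 2 * μ) + q
  have hgap : 0 ≤ 1 - 2 * μ := by linarith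
  have hsum : max (μ * q) a + max (μ * q) b ≤ 2 * (μ * δ) := by
    rcases max_cases (μ * q) a with ⟨ea, -⟩ | ⟨ea, -⟩ <;>
      rcases max_cases (μ * q) b with ⟨eb, -⟩ | ⟨eb, -⟩ <;> rw [ea, eb]
    · nlinarith [mul_nonneg hμ.le (add_nonneg ha hb)]
    · nlinarith [mul_nonneg hgap (by linarith : 0 ≤ 2 * μ - b), mul_nonneg hμ.le ha]
    · nlinarith [mul_nonneg hgap (by linarith : 0 ≤ 2 * μ - a), mul_nonneg hμ.le hb]
    · nlinarith [mul_nonneg hgap (by linarith : 0 ≤ 2 * μ - a - b)]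
  have hmq : 0 ≤ μ * q := mul_nonneg hμ.le hq
  calc max (μ * q) a ^ γ + max (μ * q) b ^ γ
      ≤ 2 * ((max (μ * q) a + max (μ * q) b) / 2) ^ γ :=
        add_rpow_le_two_mul_half_rpow hγ0.le hγ1 (hmq.trans (le_max_left _ _))
          (hmq.trans (le_max_left _ _))
    _ ≤ 2 * (μ * δ) ^ γ := by
        gcongr
        linarith
    _ = δ ^ γ := by
        rw [Real.mul_rpow hμ.le (by linarith), hγ]
        ring

end

section Cantor

variable {μ γ : ℝ}

/-- Left endpoint, in `[0, 1]`-normalised coordinates, of the generation-`M` interval with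
address `σ`; `cantorGen μ a L M` is the union of the intervals starting at `a + L * cantorLeft μ σ`. -/
noncomputable def cantorLeft (μ : ℝ) {M : ℕ} (σ : Fin M → Bool) : ℝ :=
  ∑ i : Fin M, if σ i then (1 - μ) * μ ^ (i : ℕ) else 0

lemma cantorLeft_restrict (s : ℕ → Bool) (n : ℕ) :
    cantorLeft μ (fun i : Fin n => s i) = ∑ i ∈ range n, if s i then (1 - μ) * μ ^ i else 0 :=
  Fin.sum_univ_eq_sum_range (fun i => if s i then (1 - μ) * μ ^ i else 0) n

lemma sum_range_mem_Icc (hμ₀ : 0 ≤ μ) (hμ₁ : μ ≤ 1) (s : ℕ → Bool) {m n : ℕ} (hmn : m ≤ n) :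
    ∑ i ∈ range n, (if s i then (1 - μ) * μ ^ i else 0) ∈
      Set.Icc (∑ i ∈ range m, if s i then (1 - μ) * μ ^ i else 0)
        ((∑ i ∈ range m, if s i then (1 - μ) * μ ^ i else 0) + (μ ^ m - μ ^ n)) := by
  have hterm : ∀ i, 0 ≤ (1 - μ) * μ ^ i := fun i => mul_nonneg (by linarith) (by positivity)
  rw [← sum_range_add_sum_Ico _ hmn, Set.mem_Icc]
  refine ⟨le_add_of_nonneg_right (sum_nonneg fun i _ => ?_), add_le_add le_rfl ?_⟩
  · split_ifs <;> simp [hterm]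
  calc ∑ i ∈ Ico m n, (if s i then (1 - μ) * μ ^ i else 0)
      ≤ ∑ i ∈ Ico m n, (1 - μ) * μ ^ i := sum_le_sum fun i _ => by split_ifs <;> simp [hterm]
    _ = μ ^ m - μ ^ n := by rw [← mul_sum, mul_comm, geom_sum_Ico_mul_neg _ hmn]

lemma cantorLeft_mem_Icc (hμ₀ : 0 ≤ μ) (hμ₁ : μ ≤ 1) {M : ℕ} (σ : Fin M → Bool) :
    cantorLeft μ σ ∈ Set.Icc 0 (1 - μ ^ M) := by
  have h := sum_range_mem_Icc hμ₀ hμ₁ (fun i => if h : i < M then σ ⟨i, h⟩ else false)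
    (Nat.zero_le M)
  simp only [range_zero, sum_empty, pow_zero, zero_add] at h
  rw [← cantorLeft_restrict] at h
  simpa using h

lemma add_mul_cantorLeft_mem_cantorSetMu (hμ₀ : 0 ≤ μ) (hμ₁ : μ ≤ 1) (a : ℝ) {L : ℝ}
    (hL : 0 ≤ L) {M : ℕ} (σ : Fin M → Bool) : a + L * cantorLeft μ σ ∈ cantorSetMu μ a L := by
  set s : ℕ → Bool := fun i => if h : i < M then σ ⟨i, h⟩ else false
  have hσ : σ = fun i : Fin M => s i := by funext i; simp [s]
  refine Set.mem_iInter.2 fun m => Set.mem_iUnion.2 ⟨fun i : Fin m => s i, ?_⟩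
  change a + L * cantorLeft μ σ ∈ Set.Icc (a + L * cantorLeft μ (fun i : Fin m => s i))
    (a + L * cantorLeft μ (fun i : Fin m => s i) + μ ^ m * L)
  suffices h : cantorLeft μ σ ∈ Set.Icc (cantorLeft μ (fun i : Fin m => s i))
      (cantorLeft μ (fun i : Fin m => s i) + μ ^ m) by
    have h₁ := mul_le_mul_of_nonneg_left h.1 hL
    have h₂ := mul_le_mul_of_nonneg_left h.2 hL
    constructor <;> linarith
  rw [hσ, cantorLeft_restrict, cantorLeft_restrict]
  rcases le_total m M with hmM | hMm
  · have h := sum_range_mem_Icc hμ₀ hμ₁ s hmM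
    exact ⟨h.1, h.2.trans (by linarith [pow_nonneg hμ₀ M])⟩
  · rw [sum_subset (range_subset_range.2 hMm) fun i _ hi => by simp_all [s]]
    exact ⟨le_rfl, le_add_of_nonneg_right (pow_nonneg hμ₀ m)⟩

lemma cantorLeft_cons {M : ℕ} (b : Bool) (τ : Fin M → Bool) :
    cantorLeft μ (Fin.cons b τ : Fin (M + 1) → Bool) =
      (if b then 1 - μ else 0) + μ * cantorLeft μ τ := by
  simp only [cantorLeft, Fin.sum_univ_succ, Fin.cons_zero, Fin.cons_succ, Fin.val_zero,
    pow_zero, mul_one, Fin.val_succ, mul_sum]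
  congr 1
  refine sum_congr rfl fun i _ => ?_
  split_ifs <;> ring

open Classical in
noncomputable def cantorCount (μ : ℝ) (M : ℕ) (c d : ℝ) : ℕ :=
  #{σ : Fin M → Bool | cantorLeft μ σ ∈ Set.Icc c d}

lemma cantorCount_succ (hμ : 0 < μ) (M : ℕ) (c d : ℝ) :
    cantorCount μ (M + 1) c d = cantorCount μ M (c / μ) (d / μ) +
      cantorCount μ M ((c - (1 - μ)) / μ) ((d - (1 - μ)) / μ) := by
  classical
  simp only [cantorCount, card_filter]
  rw [← (Fin.consEquiv fun _ => Bool).sum_comp, Fintype.sum_prod_type, Fintype.sum_bool]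
  simp only [Fin.consEquiv, Equiv.coe_fn_mk, cantorLeft_cons, add_mul_mem_Icc_iff hμ]
  simp [add_comm]

lemma cantorCount_le_two_pow (M : ℕ) (c d : ℝ) : cantorCount μ M c d ≤ 2 ^ M := by
  classical
  exact (card_filter_le _ _).trans_eq (by simp)

lemma cantorCount_mono (hμ₀ : 0 ≤ μ) (hμ₁ : μ ≤ 1) {M : ℕ} {c d c' d' : ℝ}
    (h : Set.Icc c d ∩ Set.Icc 0 (1 - μ ^ M) ⊆ Set.Icc c' d') :
    cantorCount μ M c d ≤ cantorCount μ M c' d' := by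
  classical
  exact card_le_card (monotone_filter_right _ fun σ _ hσ => h ⟨hσ, cantorLeft_mem_Icc hμ₀ hμ₁ σ⟩)

lemma exists_of_cantorCount_pos {M : ℕ} {c d : ℝ} (h : 0 < cantorCount μ M c d) :
    ∃ σ : Fin M → Bool, cantorLeft μ σ ∈ Set.Icc c d := by
  classical
  obtain ⟨σ, hσ⟩ := card_pos.1 h
  exact ⟨σ, (mem_filter.1 hσ).2⟩

lemma cantorCount_le_of_one_le_sub (hγ : 0 ≤ γ) {M : ℕ} {c d : ℝ} (h : 1 ≤ d - c) :
    (cantorCount μ M c d : ℝ) ≤ 2 ^ (M + 1) * max (μ ^ (M + 1)) (d - c) ^ γ :=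
  calc (cantorCount μ M c d : ℝ) ≤ 2 ^ M := by exact_mod_cast cantorCount_le_two_pow M c d
    _ ≤ 2 ^ (M + 1) * 1 := by rw [mul_one]; exact pow_le_pow_right₀ one_le_two (by omega)
    _ ≤ 2 ^ (M + 1) * max (μ ^ (M + 1)) (d - c) ^ γ := by
        gcongr
        exact Real.one_le_rpow (le_max_of_le_right h) hγ

lemma cantorCount_succ_le_of_straddle (hμ : 0 < μ) (hμ2 : μ ≤ 1 / 2) (hγ : μ ^ γ = 1 / 2)
    {M : ℕ} (ih : ∀ c d, (cantorCount μ M c d : ℝ) ≤ 2 ^ (M + 1) * max (μ ^ (M + 1)) (d - c) ^ γ)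
    {c d : ℝ} (hcd : d - c < 1) (hc : c ≤ μ - μ ^ (M + 1)) (hd : 1 - μ ≤ d) :
    (cantorCount μ (M + 1) c d : ℝ) ≤ 2 ^ (M + 1 + 1) * (d - c) ^ γ := by
  have hμ1 : μ ≤ 1 := by linarith
  have hleft : (cantorCount μ M (c / μ) (d / μ) : ℝ) ≤
      2 ^ (M + 1 + 1) * max (μ ^ (M + 1 + 1)) (μ - μ ^ (M + 1) - c) ^ γ := by
    calc (cantorCount μ M (c / μ) (d / μ) : ℝ) ≤ cantorCount μ M (c / μ) (1 - μ ^ M) := by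
          exact_mod_cast cantorCount_mono hμ.le hμ1 fun x hx => ⟨hx.1.1, hx.2.2⟩
      _ ≤ _ := ih _ _
      _ = _ := by
          rw [show 1 - μ ^ M - c / μ = (μ - μ ^ (M + 1) - c) / μ by field_simp; ring,
            two_pow_mul_max_div_rpow hμ hγ]
  have hright : (cantorCount μ M ((c - (1 - μ)) / μ) ((d - (1 - μ)) / μ) : ℝ) ≤
      2 ^ (M + 1 + 1) * max (μ ^ (M + 1 + 1)) (d - (1 - μ)) ^ γ := by
    calc (cantorCount μ M ((c - (1 - μ)) / μ) ((d - (1 - μ)) / μ) : ℝ)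
        ≤ cantorCount μ M 0 ((d - (1 - μ)) / μ) := by
          exact_mod_cast cantorCount_mono hμ.le hμ1 fun x hx => ⟨hx.2.1, hx.1.2⟩
      _ ≤ _ := ih _ _
      _ = _ := by rw [sub_zero, two_pow_mul_max_div_rpow hμ hγ]
  have hgap := max_rpow_add_max_rpow_le hμ hμ2 hγ (pow_nonneg hμ.le (M + 1)) (sub_nonneg.2 hc)
    (sub_nonneg.2 hd) (by linarith)
  rw [← pow_succ', show μ - μ ^ (M + 1) - c + (d - (1 - μ)) + (1 - 2 * μ) + μ ^ (M + 1) = d - c by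
    ring] at hgap
  rw [cantorCount_succ hμ, Nat.cast_add]
  calc _ ≤ 2 ^ (M + 1 + 1) * (max (μ ^ (M + 1 + 1)) (μ - μ ^ (M + 1) - c) ^ γ +
          max (μ ^ (M + 1 + 1)) (d - (1 - μ)) ^ γ) := by
        rw [mul_add]
        exact add_le_add hleft hright
    _ ≤ 2 ^ (M + 1 + 1) * (d - c) ^ γ := by gcongr

theorem cantorCount_le (hμ : 0 < μ) (hμ2 : μ ≤ 1 / 2) (hγ : μ ^ γ = 1 / 2) (M : ℕ) (c d : ℝ) :
    (cantorCount μ M c d : ℝ) ≤ 2 ^ (M + 1) * max (μ ^ (M + 1)) (d - c) ^ γ := by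
  have hμ1 : μ ≤ 1 := by linarith
  have hγ0 := (mem_Ioc_of_rpow_eq_half hμ hμ2 hγ).1.le
  induction M generalizing c d with
  | zero =>
    exact (Nat.cast_le.2 (cantorCount_le_two_pow 0 c d)).trans
      (by simpa using one_le_two_pow_mul_max_rpow hμ hμ2 hγ 1 (d - c))
  | succ M ih =>
    by_cases hlong : 1 ≤ d - c
    · exact cantorCount_le_of_one_le_sub hγ0 hlong
    push Not at hlong
    have hchild : ∀ e : ℝ, (cantorCount μ M ((c - e) / μ) ((d - e) / μ) : ℝ) ≤
        2 ^ (M + 1 + 1) * max (μ ^ (M + 1 + 1)) (d - c) ^ γ := by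
      intro e
      rw [← two_pow_mul_max_div_rpow hμ hγ, show (d - c) / μ = (d - e) / μ - (c - e) / μ by ring]
      exact ih _ _
    rcases Nat.eq_zero_or_pos (cantorCount μ M (c / μ) (d / μ)) with hl | hl
    · simpa [cantorCount_succ hμ, hl] using hchild (1 - μ)
    rcases Nat.eq_zero_or_pos (cantorCount μ M ((c - (1 - μ)) / μ) ((d - (1 - μ)) / μ))
      with hr | hr
    · simpa [cantorCount_succ hμ, hr] using hchild 0
    obtain ⟨σ, hσ₁, -⟩ := exists_of_cantorCount_pos hl
    obtain ⟨τ, -, hτ₂⟩ := exists_of_cantorCount_pos hr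
    rw [div_le_iff₀ hμ] at hσ₁
    rw [le_div_iff₀ hμ] at hτ₂
    have hc : c ≤ μ - μ ^ (M + 1) := by
      rw [pow_succ]; nlinarith [(cantorLeft_mem_Icc hμ.le hμ1 σ).2]
    have hd : 1 - μ ≤ d := by nlinarith [(cantorLeft_mem_Icc hμ.le hμ1 τ).1]
    calc _ ≤ 2 ^ (M + 1 + 1) * (d - c) ^ γ :=
          cantorCount_succ_le_of_straddle hμ hμ2 hγ ih hlong hc hd
      _ ≤ 2 ^ (M + 1 + 1) * max (μ ^ (M + 1 + 1)) (d - c) ^ γ := by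
          gcongr
          · linarith [pow_nonneg hμ.le (M + 1)]
          · exact le_max_right _ _

lemma cantorSetMu_subset_iUnion (a : ℝ) {L δ : ℝ} {m : ℕ} (h : μ ^ m * L ≤ δ) :
    cantorSetMu μ a L ⊆
      ⋃ σ : Fin m → Bool, Set.Icc (a + L * cantorLeft μ σ) (a + L * cantorLeft μ σ + δ) := by
  intro x hx
  obtain ⟨σ, hσ⟩ := Set.mem_iUnion.1 (Set.mem_iInter.1 hx m)
  exact Set.mem_iUnion.2 ⟨σ, hσ.1, hσ.2.trans (by rw [cantorLeft]; linarith)⟩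

end Cantor

section Covering

lemma exists_fin_cover_of_cover {E : Set ℝ} {δ : ℝ} {ι : Type*} [Fintype ι] (c : ι → ℝ)
    (h : E ⊆ ⋃ i, Set.Icc (c i) (c i + δ)) :
    ∃ c' : Fin (Fintype.card ι) → ℝ, E ⊆ ⋃ i, Set.Icc (c' i) (c' i + δ) := by
  let e := Fintype.equivFin ι
  refine ⟨c ∘ e.symm, h.trans (Set.iUnion_subset fun i => ?_)⟩
  exact Set.subset_iUnion_of_subset (e i) (by simp)

lemma covN_le_card {E : Set ℝ} {δ : ℝ} {ι : Type*} [Fintype ι] (c : ι → ℝ)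
    (h : E ⊆ ⋃ i, Set.Icc (c i) (c i + δ)) : covN E δ ≤ Fintype.card ι :=
  Nat.sInf_le (exists_fin_cover_of_cover c h)

lemma exists_cover_covN {E : Set ℝ} {δ : ℝ} {ι : Type*} [Fintype ι] (c : ι → ℝ)
    (h : E ⊆ ⋃ i, Set.Icc (c i) (c i + δ)) :
    ∃ c' : Fin (covN E δ) → ℝ, E ⊆ ⋃ i, Set.Icc (c' i) (c' i + δ) :=
  Nat.sInf_mem (s := {n | ∃ c : Fin n → ℝ, E ⊆ ⋃ i, Set.Icc (c i) (c i + δ)})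
    ⟨_, exists_fin_cover_of_cover c h⟩

end Covering

section CantorCovering

variable {μ γ : ℝ}

lemma covN_cantorSetMu_le (a : ℝ) {L δ : ℝ} {m : ℕ} (h : μ ^ m * L ≤ δ) :
    covN (cantorSetMu μ a L) δ ≤ 2 ^ m :=
  (covN_le_card _ (cantorSetMu_subset_iUnion a h)).trans_eq (by simp)

lemma one_le_two_mul_covN_cantorSetMu_mul_rpow (hμ : 0 < μ) (hμ2 : μ ≤ 1 / 2)
    (hγ : μ ^ γ = 1 / 2) (a : ℝ) {L δ : ℝ} (hL : 0 < L) (hδ : 0 < δ) :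
    1 ≤ 2 * covN (cantorSetMu μ a L) δ * (δ / L) ^ γ := by
  have hμ1 : μ < 1 := by linarith
  obtain ⟨M, hM⟩ := exists_pow_lt_of_lt_one (div_pos hδ hL) hμ1
  have hM' : μ ^ (M + 1) ≤ δ / L := (pow_le_pow_of_le_one hμ.le hμ1.le (by omega)).trans hM.le
  obtain ⟨c, hc⟩ := exists_cover_covN _ (cantorSetMu_subset_iUnion (μ := μ) a
    (le_div_iff₀ hL |>.1 hM'))
  have hcount : (2 ^ M : ℝ) ≤ ∑ i, (cantorCount μ M ((c i - a) / L) ((c i + δ - a) / L) : ℝ) := by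
    classical
    have hsub : (univ : Finset (Fin M → Bool)) ⊆ univ.biUnion fun i =>
        {σ | cantorLeft μ σ ∈ Set.Icc ((c i - a) / L) ((c i + δ - a) / L)} := by
      intro σ _
      obtain ⟨i, hi⟩ := Set.mem_iUnion.1
        (hc (add_mul_cantorLeft_mem_cantorSetMu hμ.le hμ1.le a hL.le σ))
      exact mem_biUnion.2 ⟨i, mem_univ _, mem_filter.2 ⟨mem_univ _, (add_mul_mem_Icc_iff hL).1 hi⟩⟩
    have := (card_le_card hsub).trans card_biUnion_le
    simp only [card_univ, Fintype.card_fun, Fintype.card_bool, Fintype.card_fin] at this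
    exact_mod_cast this
  have hbound : ∀ i, (cantorCount μ M ((c i - a) / L) ((c i + δ - a) / L) : ℝ) ≤
      2 ^ (M + 1) * (δ / L) ^ γ := by
    intro i
    have h := cantorCount_le hμ hμ2 hγ M ((c i - a) / L) ((c i + δ - a) / L)
    rwa [← sub_div, show c i + δ - a - (c i - a) = δ by ring, max_eq_right hM'] at h
  have h : (2 ^ M : ℝ) ≤ covN (cantorSetMu μ a L) δ * (2 ^ (M + 1) * (δ / L) ^ γ) :=
    hcount.trans ((sum_le_sum fun i _ => hbound i).trans_eq (by simp))
  rw [pow_succ] at h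
  nlinarith [pow_pos (two_pos (α := ℝ)) M]

end CantorCovering

/-- For the self-similar Cantor set `C_μ(J)` on `J = [a, a+L]` with
`γ = log 2 / log(1/μ)`, for every `δ ∈ (0,|J|)`,
`(1/2)|J|^γ δ^{-γ} ≤ N(C_μ(J), δ) ≤ 2 |J|^γ δ^{-γ}`. -/
theorem stmt6 (μ : ℝ) (hμ : 0 < μ) (hμ2 : μ ≤ 1/2) (a L : ℝ) (hL : 0 < L)
    (γ : ℝ) (hγ : γ = Real.log 2 / Real.log (1/μ))
    (δ : ℝ) (hδ : 0 < δ) (hδL : δ < L) :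
    (1/2) * L ^ γ * δ ^ (-γ) ≤ (covN (cantorSetMu μ a L) δ : ℝ) ∧
    (covN (cantorSetMu μ a L) δ : ℝ) ≤ 2 * L ^ γ * δ ^ (-γ) := by
  have hμ1 : μ < 1 := by linarith
  have hμγ : μ ^ γ = 1 / 2 := hγ ▸ rpow_log_two_div_log_one_div hμ hμ1
  have hpos : 0 < (δ / L) ^ γ := by positivity
  have hscale : L ^ γ * δ ^ (-γ) = ((δ / L) ^ γ)⁻¹ := by
    rw [Real.rpow_neg hδ.le, Real.div_rpow hδ.le hL.le, inv_div, div_eq_mul_inv]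
  rw [mul_assoc, mul_assoc, hscale]
  constructor
  · have h := one_le_two_mul_covN_cantorSetMu_mul_rpow hμ hμ2 hμγ a hL hδ
    calc 1 / 2 * ((δ / L) ^ γ)⁻¹ ≤ 1 / 2 * ((δ / L) ^ γ)⁻¹ *
          (2 * covN (cantorSetMu μ a L) δ * (δ / L) ^ γ) := le_mul_of_one_le_right (by positivity) h
      _ = covN (cantorSetMu μ a L) δ := by field_simp
  · obtain ⟨n, hn, hn'⟩ := exists_nat_pow_near_of_lt_one (div_pos hδ hL)
      ((div_le_one hL).2 hδL.le) hμ hμ1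
    have hpow : (δ / L) ^ γ ≤ (1 / 2) ^ n := by
      rw [← pow_rpow_of_rpow_eq_half hμ hμγ]
      exact Real.rpow_le_rpow (by positivity) hn'
        (mem_Ioc_of_rpow_eq_half hμ hμ2 hμγ).1.le
    calc (covN (cantorSetMu μ a L) δ : ℝ) ≤ 2 ^ (n + 1) := by
          exact_mod_cast covN_cantorSetMu_le a ((lt_div_iff₀ hL).1 hn).le
      _ = 2 * ((1 / 2) ^ n)⁻¹ := by rw [one_div, inv_pow, inv_inv, pow_succ, mul_comm]
      _ ≤ 2 * ((δ / L) ^ γ)⁻¹ := by gcongr
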